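/- Let q be a prime power and l = st for positive integers s, t. Then R_{q^{st}/q} = R_{q^{st}/q^t} · R_{q^t/q} as subsets (the product set equals the set, with each element of R_{q^{st}/q} uniquely a product), where R_{Q/q'} = {x ∈ 𝔽_Q^* : tr_{Q/q'}(x) = 1}. Equivalently, in ℤ[𝔽_{q^{st}}^*], the group ring product R_{q^{st}/q^t} · R_{q^t/q} equals R_{q^{st}/q}. -/

import Mathlib

open Finset

/-- The formal sum `∑_{x ∈ s} x` of a finite subset of a group in the
integral group ring `ℤ[G]`. -/
noncomputable def fsum {G : Type*} [Group G] [DecidableEq G] (s : Finset G) :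
    MonoidAlgebra ℤ G :=
  ∑ x ∈ s, MonoidAlgebra.single x 1

/-- The relative trace `x ↦ ∑_{i<l} x^{c^i}`. -/
def relTrace {F : Type*} [CommRing F] (c l : ℕ) (x : F) : F :=
  ∑ i ∈ Finset.range l, x ^ c ^ i

/-! With `T = relTrace #L s` the relative trace of `F/L`: the values of `T` are fixed by
`x ↦ x ^ #L`, hence lie in `L`; `T` is `L`-linear; and `tr_{F/K} = tr_{L/K} ∘ T`.
So `x * y` lies in `R_{F/K}` for `x ∈ R_{F/L}`, `y ∈ R_{L/K}`, the factor `y = T (x * y)`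
is determined by the product, and every `c ∈ R_{F/K}` factors as `(c / T c) * T c`. -/

section GroupRing

variable {G : Type*} [Group G] [DecidableEq G]

theorem fsum_mul_fsum_eq_of_bijOn_mul {s t u : Finset G}
    (hmem : ∀ a ∈ s, ∀ b ∈ t, a * b ∈ u)
    (hinj : ∀ a ∈ s, ∀ b ∈ t, ∀ a' ∈ s, ∀ b' ∈ t, a * b = a' * b' → b = b')
    (hsurj : ∀ c ∈ u, ∃ a ∈ s, ∃ b ∈ t, a * b = c) :
    fsum s * fsum t = fsum u := by
  simp only [fsum, sum_mul_sum, MonoidAlgebra.single_mul_single, one_mul, ← sum_product']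
  refine sum_bij (fun p _ => p.1 * p.2) ?_ ?_ ?_ fun _ _ => rfl
  · rintro ⟨a, b⟩ h
    rw [mem_product] at h
    exact hmem a h.1 b h.2
  · rintro ⟨a, b⟩ h ⟨a', b'⟩ h' hab
    rw [mem_product] at h h'
    obtain rfl := hinj a h.1 b h.2 a' h'.1 b' h'.2 hab
    exact Prod.ext (mul_right_cancel hab) rfl
  · intro c hc
    obtain ⟨a, ha, b, hb, rfl⟩ := hsurj c hc
    exact ⟨(a, b), mem_product.2 ⟨ha, hb⟩, rfl⟩

end GroupRing

section RelTrace

variable {R : Type*} [CommRing R]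

theorem map_relTrace {S : Type*} [CommRing S] (f : R →+* S) (c l : ℕ) (x : R) :
    f (relTrace c l x) = relTrace c l (f x) := by
  simp only [relTrace, map_sum, map_pow]

theorem relTrace_zero {c : ℕ} (hc : c ≠ 0) (l : ℕ) : relTrace c l (0 : R) = 0 :=
  sum_eq_zero fun i _ => zero_pow (pow_ne_zero i hc)

theorem relTrace_mul_of_pow_eq_self {c : ℕ} (l : ℕ) (x : R) {y : R} (hy : y ^ c = y) :
    relTrace c l (x * y) = relTrace c l x * y := by
  have hyi (i : ℕ) : y ^ c ^ i = y := by
    induction i with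
    | zero => rw [pow_zero, pow_one]
    | succ i ih => rw [pow_succ, pow_mul, ih, hy]
  simp only [relTrace, sum_mul, mul_pow, hyi]

variable (K : Type*) [Field K] [Fintype K] [Algebra K R]

theorem FiniteField.frobeniusAlgHom_pow_apply (m : ℕ) (x : R) :
    (frobeniusAlgHom K R ^ m) x = x ^ Fintype.card K ^ m := by
  rw [AlgHom.coe_pow, coe_frobeniusAlgHom, pow_iterate]

theorem relTrace_add (l : ℕ) (x y : R) :
    relTrace (Fintype.card K) l (x + y) =
      relTrace (Fintype.card K) l x + relTrace (Fintype.card K) l y := by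
  simp only [relTrace, ← sum_add_distrib, ← FiniteField.frobeniusAlgHom_pow_apply K, map_add]

theorem relTrace_pow_card_of_pow_eq_self (l : ℕ) {x : R}
    (hx : x ^ Fintype.card K ^ l = x) :
    relTrace (Fintype.card K) l x ^ Fintype.card K = relTrace (Fintype.card K) l x := by
  have hshift := sum_range_succ' (fun i => x ^ Fintype.card K ^ i) l
  rw [sum_range_succ, hx, pow_zero, pow_one] at hshift
  rw [relTrace]
  change FiniteField.frobeniusAlgHom K R (∑ i ∈ range l, x ^ Fintype.card K ^ i) = _
  simpa only [map_sum, FiniteField.coe_frobeniusAlgHom, ← pow_mul, ← pow_succ]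
    using (add_right_cancel hshift).symm

theorem relTrace_mul (s t : ℕ) (x : R) :
    relTrace (Fintype.card K) (s * t) x =
      relTrace (Fintype.card K) t (relTrace (Fintype.card K ^ t) s x) := by
  induction s with
  | zero => simp [relTrace]
  | succ s ih =>
    have hsplit : relTrace (Fintype.card K) ((s + 1) * t) x =
        relTrace (Fintype.card K) (s * t) x +
          ∑ i ∈ range t, x ^ Fintype.card K ^ (s * t + i) := by
      rw [Nat.succ_mul]
      exact sum_range_add _ _ _
    have hlast : relTrace (Fintype.card K) t (x ^ (Fintype.card K ^ t) ^ s) =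
        ∑ i ∈ range t, x ^ Fintype.card K ^ (s * t + i) := by
      simp only [relTrace, ← pow_mul, ← pow_add, mul_comm t s]
    rw [hsplit, ih, ← hlast, ← relTrace_add]
    exact congrArg _ (sum_range_succ _ _).symm

end RelTrace

open Polynomial in
theorem exists_algebraMap_eq_of_pow_card_eq_self {L F : Type*} [Field L] [Fintype L] [Field F]
    [Algebra L F] {z : F} (hz : z ^ Fintype.card L = z) : ∃ y : L, algebraMap L F y = z := by
  have hroots : (X ^ Fintype.card L - X : L[X]).roots.map (algebraMap L F) =
      (X ^ Fintype.card L - X : F[X]).roots := by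
    rw [roots_map_of_injective_of_card_eq_natDegree (algebraMap L F).injective]
    · simp
    · rw [FiniteField.roots_X_pow_card_sub_X, FiniteField.X_pow_card_sub_X_natDegree_eq L
        Fintype.one_lt_card]
      rfl
  have hz' : z ∈ (X ^ Fintype.card L - X : F[X]).roots := by
    rw [mem_roots (FiniteField.X_pow_card_sub_X_ne_zero F Fintype.one_lt_card), IsRoot.def,
      eval_sub, eval_pow, eval_X, hz, sub_self]
  rw [← hroots, FiniteField.roots_X_pow_card_sub_X, Multiset.mem_map] at hz'
  obtain ⟨y, -, hy⟩ := hz'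
  exact ⟨y, hy⟩

section Tower

variable {K L F : Type*} [Field K] [Fintype K] [Field L] [Fintype L] [Field F] [Algebra L F]

theorem relTrace_mul_algebraMap (s : ℕ) (x : F) (y : L) :
    relTrace (Fintype.card L) s (x * algebraMap L F y) =
      relTrace (Fintype.card L) s x * algebraMap L F y :=
  relTrace_mul_of_pow_eq_self s x (by rw [← map_pow, FiniteField.pow_card])

theorem exists_algebraMap_eq_relTrace [Fintype F] {s : ℕ}
    (hF : Fintype.card F = Fintype.card L ^ s) (x : F) :
    ∃ y : L, algebraMap L F y = relTrace (Fintype.card L) s x :=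
  exists_algebraMap_eq_of_pow_card_eq_self <|
    relTrace_pow_card_of_pow_eq_self L s (by rw [← hF, FiniteField.pow_card])

theorem relTrace_mul_of_algebraMap_eq_relTrace [Algebra K F] {s t : ℕ}
    (hL : Fintype.card L = Fintype.card K ^ t) {x : F} {y : L}
    (hy : algebraMap L F y = relTrace (Fintype.card L) s x) :
    relTrace (Fintype.card K) (s * t) x = algebraMap L F (relTrace (Fintype.card K) t y) := by
  rw [relTrace_mul K, ← hL, ← hy, map_relTrace]

variable [Algebra K F] {s t : ℕ}

theorem relTrace_mul_algebraMap_eq_one (hL : Fintype.card L = Fintype.card K ^ t) {x : F} {y : L}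
    (hx : relTrace (Fintype.card L) s x = 1) (hy : relTrace (Fintype.card K) t y = 1) :
    relTrace (Fintype.card K) (s * t) (x * algebraMap L F y) = 1 := by
  have hmid : algebraMap L F y = relTrace (Fintype.card L) s (x * algebraMap L F y) := by
    rw [relTrace_mul_algebraMap, hx, one_mul]
  rw [relTrace_mul_of_algebraMap_eq_relTrace hL hmid, hy, map_one]

theorem eq_of_mul_algebraMap_eq {x x' : F} {y y' : L} (hx : relTrace (Fintype.card L) s x = 1)
    (hx' : relTrace (Fintype.card L) s x' = 1) (h : x * algebraMap L F y = x' * algebraMap L F y') :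
    y = y' := by
  apply (algebraMap L F).injective
  simpa only [relTrace_mul_algebraMap, hx, hx', one_mul] using
    congrArg (relTrace (Fintype.card L) s) h

theorem exists_relTrace_eq_one_of_relTrace_mul_eq_one [Fintype F]
    (hL : Fintype.card L = Fintype.card K ^ t) (hF : Fintype.card F = Fintype.card L ^ s) {c : F}
    (hc : relTrace (Fintype.card K) (s * t) c = 1) :
    ∃ y : Lˣ, relTrace (Fintype.card K) t (y : L) = 1 ∧
      relTrace (Fintype.card L) s (c * (algebraMap L F y)⁻¹) = 1 := by
  obtain ⟨y, hy⟩ := exists_algebraMap_eq_relTrace hF c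
  have hyK : relTrace (Fintype.card K) t y = 1 := (algebraMap L F).injective <| by
    rw [← relTrace_mul_of_algebraMap_eq_relTrace hL hy, hc, map_one]
  have hy0 : y ≠ 0 := by
    rintro rfl
    rw [relTrace_zero Fintype.card_ne_zero] at hyK
    exact zero_ne_one hyK
  have hy0' : algebraMap L F y ≠ 0 := (map_ne_zero _).2 hy0
  refine ⟨Units.mk0 y hy0, hyK, mul_right_cancel₀ hy0' ?_⟩
  rw [Units.val_mk0, ← relTrace_mul_algebraMap, inv_mul_cancel_right₀ hy0', one_mul, hy]

end Tower

theorem stmt10_general {K L F : Type*} [Field K] [Field L] [Field F]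
    [Fintype K] [Fintype L] [Fintype F] [DecidableEq F] [DecidableEq L]
    [Algebra L F] [Algebra K F]
    (q s t : ℕ) (hq : Fintype.card K = q) (hL : Fintype.card L = q ^ t)
    (hF : Fintype.card F = q ^ (s * t)) :
    fsum ((univ : Finset Fˣ).filter
        (fun x : Fˣ => relTrace (q ^ t) s (x : F) = 1)) *
      fsum (((univ : Finset Lˣ).filter
          (fun y : Lˣ => relTrace q t (y : L) = 1)).image
        (Units.map (algebraMap L F : L →+* F).toMonoidHom)) =
    fsum ((univ : Finset Fˣ).filter
      (fun x : Fˣ => relTrace q (s * t) (x : F) = 1)) := by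
  subst hq
  have hF' : Fintype.card F = Fintype.card L ^ s := by rw [hF, hL, ← pow_mul, mul_comm]
  rw [← hL]
  apply fsum_mul_fsum_eq_of_bijOn_mul
  · simp only [mem_filter, mem_univ, true_and, mem_image, forall_exists_index, and_imp]
    rintro x hx _ y hy rfl
    simpa using relTrace_mul_algebraMap_eq_one hL hx hy
  · simp only [mem_filter, mem_univ, true_and, mem_image, forall_exists_index, and_imp]
    rintro x hx _ y - rfl x' hx' _ y' - rfl h
    have hyy' := eq_of_mul_algebraMap_eq hx hx' (by simpa using congrArg Units.val h)
    rw [Units.ext hyy']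
  · simp only [mem_filter, mem_univ, true_and]
    intro c hc
    obtain ⟨y, hy, hcy⟩ := exists_relTrace_eq_one_of_relTrace_mul_eq_one hL hF' hc
    exact ⟨_, by simpa using hcy, _, mem_image_of_mem _ (by simpa using hy),
      inv_mul_cancel_right c (Units.map (algebraMap L F : L →+* F).toMonoidHom y)⟩

/-- with `𝔽_q ⊆ 𝔽_{q^t} ⊆ 𝔽_{q^{st}}`, the group ring product
`R_{q^{st}/q^t} · R_{q^t/q}` equals `R_{q^{st}/q}` in `ℤ[𝔽_{q^{st}}^*]`, where
`R_{Q/q'} = {x : tr_{Q/q'}(x) = 1}` and `R_{q^t/q}` is viewed inside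
`𝔽_{q^{st}}^*` via the embedding. -/
theorem stmt10 {K L F : Type*} [Field K] [Field L] [Field F]
    [Fintype K] [Fintype L] [Fintype F] [DecidableEq F] [DecidableEq L]
    [Algebra K L] [Algebra L F] [Algebra K F] [IsScalarTower K L F]
    (q s t : ℕ) (hq : Fintype.card K = q) (hL : Fintype.card L = q ^ t)
    (hF : Fintype.card F = q ^ (s * t)) (hs : 1 ≤ s) (ht : 1 ≤ t) :
    fsum ((univ : Finset Fˣ).filter
        (fun x : Fˣ => relTrace (q ^ t) s (x : F) = 1)) *
      fsum (((univ : Finset Lˣ).filter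
          (fun y : Lˣ => relTrace q t (y : L) = 1)).image
        (Units.map (algebraMap L F : L →+* F).toMonoidHom)) =
    fsum ((univ : Finset Fˣ).filter
      (fun x : Fˣ => relTrace q (s * t) (x : F) = 1)) :=
  stmt10_general q s t hq hL hF
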